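/- Adequacy of the calculus ME_P for three-valued minimally inconsistent entailment: for finite P-theories Γ and Δ, Γ ⊨ᵐ_P Δ holds if and only if the ME_P-sequent ∅;Γ,∅̄⇒Δ;Var(Γ∪Δ) is provable in ME_P, where Var(Γ∪Δ) is the set of all atoms occurring in formulas of Γ or Δ. -/

import Mathlib

/-- Truth values of the three-valued logic P: f < b < t. -/
inductive V3 : Type
  | f | b | t
deriving DecidableEq, Repr

namespace V3

/-- Negation: t, b, f ↦ f, b, t. -/
def negv : V3 → V3
  | .f => .t
  | .b => .b
  | .t => .f

/-- Conjunction: minimum with respect to f < b < t. -/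
def conjv : V3 → V3 → V3
  | .f, _ => .f
  | _, .f => .f
  | .b, _ => .b
  | _, .b => .b
  | .t, .t => .t

/-- Implication: `x ⊃ y` is `y` if `x` is designated (b or t), and `t` otherwise. -/
def impv : V3 → V3 → V3
  | .f, _ => .t
  | _, y => y

end V3

/-- Formulas of the three-valued logic P, with atoms indexed by ℕ, the constant
F, negation, conjunction, and implication. -/
inductive PForm : Type
  | atom : ℕ → PForm
  | fls : PForm
  | neg : PForm → PForm
  | conj : PForm → PForm → PForm
  | imp : PForm → PForm → PForm
deriving DecidableEq

namespace PForm

/-- The valuation of P extending an interpretation `I : ℕ → V3`. -/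
def val (I : ℕ → V3) : PForm → V3
  | atom p => I p
  | fls => .f
  | neg φ => (φ.val I).negv
  | conj φ ψ => (φ.val I).conjv (ψ.val I)
  | imp φ ψ => (φ.val I).impv (ψ.val I)

/-- `I` is a P-model of `φ`: `v_I(φ)` is designated, i.e. b or t. -/
def IsModel (I : ℕ → V3) (φ : PForm) : Prop := φ.val I = .b ∨ φ.val I = .t

/-- `I` is a P-model of the theory `Γ`. -/
def IsModelSet (I : ℕ → V3) (Γ : Set PForm) : Prop := ∀ φ ∈ Γ, IsModel I φ

end PForm

/-- A P-sequent `Γ₁ | Γ₂ | Γ₃` is true under `I` if some formula of `Γ₁` takes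
value f, or some formula of `Γ₂` takes value b, or some formula of `Γ₃` takes
value t under `I`. -/
def PSeqTrue (I : ℕ → V3) (Γ₁ Γ₂ Γ₃ : Finset PForm) : Prop :=
  (∃ φ ∈ Γ₁, φ.val I = .f) ∨ (∃ φ ∈ Γ₂, φ.val I = .b) ∨ (∃ φ ∈ Γ₃, φ.val I = .t)

/-- A P-sequent is valid if it is true under every interpretation. -/
def PSeqValid (Γ₁ Γ₂ Γ₃ : Finset PForm) : Prop := ∀ I, PSeqTrue I Γ₁ Γ₂ Γ₃

/-- The sequent calculus `S_P` for the three-valued logic P (components in the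
order f | b | t). -/
inductive SP : Finset PForm → Finset PForm → Finset PForm → Prop
  | ax (Γ Δ Ω : Finset PForm) (φ : PForm) :
      SP (insert φ Γ) (insert φ Δ) (insert φ Ω)
  | axF (Γ Δ Ω : Finset PForm) :
      SP (insert .fls Γ) Δ Ω
  | negF {Γ Δ Ω : Finset PForm} {φ : PForm} :
      SP Γ Δ (insert φ Ω) → SP (insert (.neg φ) Γ) Δ Ω
  | negB {Γ Δ Ω : Finset PForm} {φ : PForm} :
      SP Γ (insert φ Δ) Ω → SP Γ (insert (.neg φ) Δ) Ω
  | negT {Γ Δ Ω : Finset PForm} {φ : PForm} :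
      SP (insert φ Γ) Δ Ω → SP Γ Δ (insert (.neg φ) Ω)
  | conjF {Γ Δ Ω : Finset PForm} {φ ψ : PForm} :
      SP (insert φ (insert ψ Γ)) Δ Ω → SP (insert (.conj φ ψ) Γ) Δ Ω
  | conjB {Γ Δ Ω : Finset PForm} {φ ψ : PForm} :
      SP Γ (insert φ (insert ψ Δ)) Ω → SP Γ (insert φ Δ) (insert φ Ω) →
      SP Γ (insert ψ Δ) (insert ψ Ω) → SP Γ (insert (.conj φ ψ) Δ) Ω
  | conjT {Γ Δ Ω : Finset PForm} {φ ψ : PForm} :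
      SP Γ Δ (insert φ Ω) → SP Γ Δ (insert ψ Ω) → SP Γ Δ (insert (.conj φ ψ) Ω)
  | impF {Γ Δ Ω : Finset PForm} {φ ψ : PForm} :
      SP Γ (insert φ Δ) (insert φ Ω) → SP (insert ψ Γ) Δ Ω →
      SP (insert (.imp φ ψ) Γ) Δ Ω
  | impB {Γ Δ Ω : Finset PForm} {φ ψ : PForm} :
      SP Γ (insert φ Δ) (insert φ Ω) → SP Γ (insert ψ Δ) Ω →
      SP Γ (insert (.imp φ ψ) Δ) Ω
  | impT {Γ Δ Ω : Finset PForm} {φ ψ : PForm} :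
      SP (insert φ Γ) Δ (insert ψ Ω) → SP Γ Δ (insert (.imp φ ψ) Ω)
  | wF {Γ Δ Ω : Finset PForm} (φ : PForm) :
      SP Γ Δ Ω → SP (insert φ Γ) Δ Ω
  | wB {Γ Δ Ω : Finset PForm} (φ : PForm) :
      SP Γ Δ Ω → SP Γ (insert φ Δ) Ω
  | wT {Γ Δ Ω : Finset PForm} (φ : PForm) :
      SP Γ Δ Ω → SP Γ Δ (insert φ Ω)


/-- A P-anti-sequent `Γ₁ ∤ Γ₂ ∤ Γ₃` is refuted by `I` if no formula of `Γ₁`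
takes value f, no formula of `Γ₂` takes value b, and no formula of `Γ₃` takes
value t under `I`. -/
def PAntiRefutedBy (I : ℕ → V3) (Γ₁ Γ₂ Γ₃ : Finset PForm) : Prop :=
  (∀ φ ∈ Γ₁, φ.val I ≠ .f) ∧ (∀ φ ∈ Γ₂, φ.val I ≠ .b) ∧ (∀ φ ∈ Γ₃, φ.val I ≠ .t)

/-- A P-anti-sequent is refutable if some interpretation refutes it. -/
def PAntiRefutable (Γ₁ Γ₂ Γ₃ : Finset PForm) : Prop := ∃ I, PAntiRefutedBy I Γ₁ Γ₂ Γ₃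

/-- A formula that is an atom or the constant F. -/
def PForm.IsBasic : PForm → Prop
  | .atom _ => True
  | .fls => True
  | _ => False

/-- The anti-sequent calculus `R_P` for the three-valued logic P (components in
the order f ∤ b ∤ t). -/
inductive RP : Finset PForm → Finset PForm → Finset PForm → Prop
  | ax (Γ Δ Ω : Finset PForm) :
      (∀ φ ∈ Γ ∪ Δ ∪ Ω, φ.IsBasic) → Γ ∩ Δ ∩ Ω = ∅ → .fls ∉ Γ →
      RP Γ Δ Ω
  | negF {Γ Δ Ω : Finset PForm} {φ : PForm} :
      RP Γ Δ (insert φ Ω) → RP (insert (.neg φ) Γ) Δ Ω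
  | negB {Γ Δ Ω : Finset PForm} {φ : PForm} :
      RP Γ (insert φ Δ) Ω → RP Γ (insert (.neg φ) Δ) Ω
  | negT {Γ Δ Ω : Finset PForm} {φ : PForm} :
      RP (insert φ Γ) Δ Ω → RP Γ Δ (insert (.neg φ) Ω)
  | conjF {Γ Δ Ω : Finset PForm} {φ ψ : PForm} :
      RP (insert φ (insert ψ Γ)) Δ Ω → RP (insert (.conj φ ψ) Γ) Δ Ω
  | conjB1 {Γ Δ Ω : Finset PForm} {φ ψ : PForm} :
      RP Γ (insert φ (insert ψ Δ)) Ω → RP Γ (insert (.conj φ ψ) Δ) Ω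
  | conjB2 {Γ Δ Ω : Finset PForm} {φ ψ : PForm} :
      RP Γ (insert φ Δ) (insert φ Ω) → RP Γ (insert (.conj φ ψ) Δ) Ω
  | conjB3 {Γ Δ Ω : Finset PForm} {φ ψ : PForm} :
      RP Γ (insert ψ Δ) (insert ψ Ω) → RP Γ (insert (.conj φ ψ) Δ) Ω
  | conjT1 {Γ Δ Ω : Finset PForm} {φ ψ : PForm} :
      RP Γ Δ (insert φ Ω) → RP Γ Δ (insert (.conj φ ψ) Ω)
  | conjT2 {Γ Δ Ω : Finset PForm} {φ ψ : PForm} :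
      RP Γ Δ (insert ψ Ω) → RP Γ Δ (insert (.conj φ ψ) Ω)
  | impF1 {Γ Δ Ω : Finset PForm} {φ ψ : PForm} :
      RP Γ (insert φ Δ) (insert φ Ω) → RP (insert (.imp φ ψ) Γ) Δ Ω
  | impF2 {Γ Δ Ω : Finset PForm} {φ ψ : PForm} :
      RP (insert ψ Γ) Δ Ω → RP (insert (.imp φ ψ) Γ) Δ Ω
  | impB1 {Γ Δ Ω : Finset PForm} {φ ψ : PForm} :
      RP Γ (insert φ Δ) (insert φ Ω) → RP Γ (insert (.imp φ ψ) Δ) Ω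
  | impB2 {Γ Δ Ω : Finset PForm} {φ ψ : PForm} :
      RP Γ (insert ψ Δ) Ω → RP Γ (insert (.imp φ ψ) Δ) Ω
  | impT {Γ Δ Ω : Finset PForm} {φ ψ : PForm} :
      RP (insert φ Γ) Δ (insert ψ Ω) → RP Γ Δ (insert (.imp φ ψ) Ω)


/-- The set of atoms occurring in a P-formula. -/
def PForm.pvars : PForm → Finset ℕ
  | .atom p => {p}
  | .fls => ∅
  | .neg φ => φ.pvars
  | .conj φ ψ => φ.pvars ∪ ψ.pvars
  | .imp φ ψ => φ.pvars ∪ ψ.pvars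

/-- `I` is a minimally inconsistent P-model of `Γ`: no P-model `J` of `Γ`
makes a strictly smaller set of atoms take the value b. -/
def PMinIncModel (I : ℕ → V3) (Γ : Set PForm) : Prop :=
  PForm.IsModelSet I Γ ∧
    ¬ ∃ J : ℕ → V3, PForm.IsModelSet J Γ ∧ {p : ℕ | J p = .b} ⊂ {p : ℕ | I p = .b}

/-- `Γ ⊨ᵐ_P Δ`: every minimally inconsistent P-model of `Γ` is a P-model of
some member of `Δ`. -/
def PMinEntails (Γ Δ : Set PForm) : Prop :=
  ∀ I, PMinIncModel I Γ → ∃ δ ∈ Δ, PForm.IsModel I δ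

/-- The calculus `ME_P` on sequents `Σ;Γ,Π̄⇒Δ;Θ` (arguments in the order
`Σ Γ Π Δ Θ`, where `Π` records the atoms required not to take the value b),
with rules (m1'), (m2') and (m3). -/
inductive MEP : Finset ℕ → Finset PForm → Finset ℕ → Finset PForm → Finset ℕ → Prop
  | m1 {S Pi Θ : Finset ℕ} {Γ Δ : Finset PForm} {q : ℕ} :
      RP Γ ((insert q (Θ ∪ Pi)).image PForm.atom) ∅ →
      MEP (insert q S) Γ Pi Δ Θ
  | m2 {S Pi Θ : Finset ℕ} {Γ Δ : Finset PForm} :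
      SP (S.image PForm.atom ∪ Γ) (Δ ∪ Pi.image PForm.atom) (Δ ∪ S.image PForm.atom) →
      MEP S Γ Pi Δ Θ
  | m3 {S Pi Θ : Finset ℕ} {Γ Δ : Finset PForm} {q : ℕ} :
      MEP (insert q S) Γ Pi Δ Θ →
      MEP S Γ (insert q Pi) Δ Θ →
      MEP S Γ Pi Δ (insert q Θ)

/-! Every three-sided sequent is provable in `S_P` or in `R_P`: for a non-atomic formula in any
component, the premises of its `S_P`-rule are exactly the premises of its `R_P`-rules, and a
sequent of atoms and `F` is an axiom of one of the two calculi. Since `S_P`-provable sequents are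
valid and `R_P`-provable anti-sequents are refutable, both calculi are complete.

`ME_P` is sound for the following reading of `Σ;Γ,Π̄⇒Δ;Θ`: a model of `Γ` that is `b` on `Σ`,
not `b` on `Π`, and whose `b`-atoms within `Σ ∪ Π ∪ Θ` form a minimal set among the models of `Γ`
not `b` on `Π`, is a model of some member of `Δ`. A minimally inconsistent model of `Γ` satisfies
this premise for `Σ = Π = ∅` and `Θ = Var(Γ ∪ Δ)`, since a competitor can be reset to `t` outside
the atoms of `Γ`. Conversely, (m3) sorts each atom of `Var(Γ ∪ Δ)` into `Σ` or `Π`. Then either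
some model of `Γ` avoiding `b` on `Π` also avoids `b` at an atom of `Σ`, an `R_P`-refutation as
(m1) requires, or every countermodel of the `S_P`-sequent of (m2), reset to `t` outside
`Var(Γ ∪ Δ)`, would be a minimally inconsistent model of `Γ` refuting `Δ`. -/

namespace V3

lemma ne_f_iff {x : V3} : x ≠ .f ↔ x = .b ∨ x = .t := by cases x <;> simp

lemma exists_avoiding {p q r : Prop} (h : ¬(p ∧ q ∧ r)) :
    ∃ v : V3, (p → v ≠ .f) ∧ (q → v ≠ .b) ∧ (r → v ≠ .t) := by
  by_cases hr : r
  · by_cases hq : q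
    · exact ⟨.f, by grind⟩
    · exact ⟨.b, by grind⟩
  · exact ⟨.t, by grind⟩

end V3

namespace PForm
variable {I J : ℕ → V3} {φ : PForm}

@[simp] lemma val_atom (I : ℕ → V3) (p : ℕ) : (atom p).val I = I p := rfl

@[simp] lemma val_fls (I : ℕ → V3) : fls.val I = .f := rfl

lemma val_trichotomy (I : ℕ → V3) (φ : PForm) :
    φ.val I = .f ∨ φ.val I = .b ∨ φ.val I = .t := by
  cases φ.val I <;> simp

theorem val_congr (h : Set.EqOn I J φ.pvars) : φ.val I = φ.val J := by
  induction φ with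
  | atom p => exact h (by simp [pvars])
  | fls => rfl
  | neg φ ih => simp only [val, ih h]
  | conj φ ψ ihφ ihψ | imp φ ψ ihφ ihψ =>
    simp only [val, ihφ (h.mono (by simp [pvars])), ihψ (h.mono (by simp [pvars]))]

theorem isModel_congr (h : Set.EqOn I J φ.pvars) : IsModel I φ ↔ IsModel J φ := by
  simp only [IsModel, val_congr h]

theorem isModel_iff_val_ne_f : IsModel I φ ↔ φ.val I ≠ .f := V3.ne_f_iff.symm

theorem isModelSet_piecewise {Γ : Finset PForm} {W : Finset ℕ} (hΓW : Γ.biUnion pvars ⊆ W)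
    (hI : IsModelSet I Γ) (g : ℕ → V3) : IsModelSet (W.piecewise I g) Γ := fun φ hφ =>
  (isModel_congr fun _ hp => W.piecewise_eq_of_mem _ _
    (hΓW (Finset.mem_biUnion.2 ⟨φ, hφ, hp⟩))).2 (hI φ hφ)

/-- Conjunction and implication count their arguments twice because rules such as `(⊃:f)` copy
a subformula into two components of the same premise. -/
def weight : PForm → ℕ
  | atom _ | fls => 1
  | neg φ => φ.weight + 1
  | conj φ ψ | imp φ ψ => 2 * (φ.weight + ψ.weight) + 1

end PForm

open PForm

section Sequents
variable {I : ℕ → V3} {Γ₁ Γ₂ Γ₃ : Finset PForm} {φ : PForm}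

lemma pSeqTrue_insert₁ :
    PSeqTrue I (insert φ Γ₁) Γ₂ Γ₃ ↔ φ.val I = .f ∨ PSeqTrue I Γ₁ Γ₂ Γ₃ := by
  simp only [PSeqTrue, Finset.exists_mem_insert, or_assoc]

lemma pSeqTrue_insert₂ :
    PSeqTrue I Γ₁ (insert φ Γ₂) Γ₃ ↔ φ.val I = .b ∨ PSeqTrue I Γ₁ Γ₂ Γ₃ := by
  simp only [PSeqTrue, Finset.exists_mem_insert]; grind

lemma pSeqTrue_insert₃ :
    PSeqTrue I Γ₁ Γ₂ (insert φ Γ₃) ↔ φ.val I = .t ∨ PSeqTrue I Γ₁ Γ₂ Γ₃ := by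
  simp only [PSeqTrue, Finset.exists_mem_insert]; grind

lemma pAntiRefutedBy_insert₁ :
    PAntiRefutedBy I (insert φ Γ₁) Γ₂ Γ₃ ↔ φ.val I ≠ .f ∧ PAntiRefutedBy I Γ₁ Γ₂ Γ₃ := by
  simp only [PAntiRefutedBy, Finset.forall_mem_insert]; grind

lemma pAntiRefutedBy_insert₂ :
    PAntiRefutedBy I Γ₁ (insert φ Γ₂) Γ₃ ↔ φ.val I ≠ .b ∧ PAntiRefutedBy I Γ₁ Γ₂ Γ₃ := by
  simp only [PAntiRefutedBy, Finset.forall_mem_insert]; grind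

lemma pAntiRefutedBy_insert₃ :
    PAntiRefutedBy I Γ₁ Γ₂ (insert φ Γ₃) ↔ φ.val I ≠ .t ∧ PAntiRefutedBy I Γ₁ Γ₂ Γ₃ := by
  simp only [PAntiRefutedBy, Finset.forall_mem_insert]; grind

lemma pSeqTrue_iff_not_pAntiRefutedBy :
    PSeqTrue I Γ₁ Γ₂ Γ₃ ↔ ¬ PAntiRefutedBy I Γ₁ Γ₂ Γ₃ := by
  simp only [PSeqTrue, PAntiRefutedBy, not_and_or, not_forall, not_not, exists_prop]

theorem SP.pSeqTrue (I : ℕ → V3) (h : SP Γ₁ Γ₂ Γ₃) : PSeqTrue I Γ₁ Γ₂ Γ₃ := by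
  induction h with
  | ax _ _ _ φ =>
    rcases val_trichotomy I φ with h | h | h <;>
      simp [pSeqTrue_insert₁, pSeqTrue_insert₂, pSeqTrue_insert₃, h]
  | _ =>
    simp only [pSeqTrue_insert₁, pSeqTrue_insert₂, pSeqTrue_insert₃, val] at *
    grind [V3.negv, V3.conjv, V3.impv]

theorem RP.pAntiRefutable (h : RP Γ₁ Γ₂ Γ₃) : PAntiRefutable Γ₁ Γ₂ Γ₃ := by
  induction h with
  | ax Γ Δ Ω hbasic hdisj hF =>
    choose I hI using fun p =>
      V3.exists_avoiding (p := atom p ∈ Γ) (q := atom p ∈ Δ) (r := atom p ∈ Ω)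
        fun h => Finset.eq_empty_iff_forall_notMem.1 hdisj (atom p) (by simp [h])
    refine ⟨I, ?_, ?_, ?_⟩ <;> intro φ hφ <;> have := hbasic φ (by simp [hφ]) <;>
      cases φ <;> simp_all [IsBasic]
  | _ =>
    obtain ⟨I, hI⟩ := ‹PAntiRefutable _ _ _›
    refine ⟨I, ?_⟩
    simp only [pAntiRefutedBy_insert₁, pAntiRefutedBy_insert₂, pAntiRefutedBy_insert₃, val] at *
    grind [V3.negv, V3.conjv, V3.impv, val_trichotomy]

end Sequents

def seqWeight (Γ₁ Γ₂ Γ₃ : Finset PForm) : ℕ :=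
  ∑ φ ∈ Γ₁, φ.weight + ∑ φ ∈ Γ₂, φ.weight + ∑ φ ∈ Γ₃, φ.weight

lemma sum_weight_insert_le (φ : PForm) (X : Finset PForm) :
    ∑ ψ ∈ insert φ X, ψ.weight ≤ φ.weight + ∑ ψ ∈ X, ψ.weight := by
  by_cases h : φ ∈ X
  · simp [Finset.insert_eq_of_mem h]
  · rw [Finset.sum_insert h]

section Decomposition
variable {Γ₁ Γ₂ Γ₃ : Finset PForm} {χ : PForm}

theorem SP_or_RP_insert₁ (hχ : ¬ χ.IsBasic)
    (ih : ∀ Δ₁ Δ₂ Δ₃, seqWeight Δ₁ Δ₂ Δ₃ < χ.weight + seqWeight Γ₁ Γ₂ Γ₃ →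
      SP Δ₁ Δ₂ Δ₃ ∨ RP Δ₁ Δ₂ Δ₃) :
    SP (insert χ Γ₁) Γ₂ Γ₃ ∨ RP (insert χ Γ₁) Γ₂ Γ₃ := by
  cases χ with
  | atom | fls => exact absurd trivial hχ
  | neg φ =>
    rcases ih Γ₁ Γ₂ (insert φ Γ₃) (by grind [seqWeight, weight, sum_weight_insert_le])
      with h | h
    exacts [.inl h.negF, .inr h.negF]
  | conj φ ψ =>
    rcases ih (insert φ (insert ψ Γ₁)) Γ₂ Γ₃ (by grind [seqWeight, weight, sum_weight_insert_le])
      with h | h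
    exacts [.inl h.conjF, .inr h.conjF]
  | imp φ ψ =>
    rcases ih Γ₁ (insert φ Γ₂) (insert φ Γ₃) (by grind [seqWeight, weight, sum_weight_insert_le])
      with h₁ | h₁
    · rcases ih (insert ψ Γ₁) Γ₂ Γ₃ (by grind [seqWeight, weight, sum_weight_insert_le])
        with h₂ | h₂
      exacts [.inl (h₁.impF h₂), .inr h₂.impF2]
    · exact .inr h₁.impF1

theorem SP_or_RP_insert₂ (hχ : ¬ χ.IsBasic)
    (ih : ∀ Δ₁ Δ₂ Δ₃, seqWeight Δ₁ Δ₂ Δ₃ < χ.weight + seqWeight Γ₁ Γ₂ Γ₃ →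
      SP Δ₁ Δ₂ Δ₃ ∨ RP Δ₁ Δ₂ Δ₃) :
    SP Γ₁ (insert χ Γ₂) Γ₃ ∨ RP Γ₁ (insert χ Γ₂) Γ₃ := by
  cases χ with
  | atom | fls => exact absurd trivial hχ
  | neg φ =>
    rcases ih Γ₁ (insert φ Γ₂) Γ₃ (by grind [seqWeight, weight, sum_weight_insert_le])
      with h | h
    exacts [.inl h.negB, .inr h.negB]
  | conj φ ψ =>
    rcases ih Γ₁ (insert φ (insert ψ Γ₂)) Γ₃ (by grind [seqWeight, weight, sum_weight_insert_le])
      with h₁ | h₁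
    · rcases ih Γ₁ (insert φ Γ₂) (insert φ Γ₃) (by grind [seqWeight, weight, sum_weight_insert_le])
        with h₂ | h₂
      · rcases ih Γ₁ (insert ψ Γ₂) (insert ψ Γ₃)
          (by grind [seqWeight, weight, sum_weight_insert_le]) with h₃ | h₃
        exacts [.inl (h₁.conjB h₂ h₃), .inr h₃.conjB3]
      · exact .inr h₂.conjB2
    · exact .inr h₁.conjB1
  | imp φ ψ =>
    rcases ih Γ₁ (insert φ Γ₂) (insert φ Γ₃) (by grind [seqWeight, weight, sum_weight_insert_le])
      with h₁ | h₁
    · rcases ih Γ₁ (insert ψ Γ₂) Γ₃ (by grind [seqWeight, weight, sum_weight_insert_le])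
        with h₂ | h₂
      exacts [.inl (h₁.impB h₂), .inr h₂.impB2]
    · exact .inr h₁.impB1

theorem SP_or_RP_insert₃ (hχ : ¬ χ.IsBasic)
    (ih : ∀ Δ₁ Δ₂ Δ₃, seqWeight Δ₁ Δ₂ Δ₃ < χ.weight + seqWeight Γ₁ Γ₂ Γ₃ →
      SP Δ₁ Δ₂ Δ₃ ∨ RP Δ₁ Δ₂ Δ₃) :
    SP Γ₁ Γ₂ (insert χ Γ₃) ∨ RP Γ₁ Γ₂ (insert χ Γ₃) := by
  cases χ with
  | atom | fls => exact absurd trivial hχ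
  | neg φ =>
    rcases ih (insert φ Γ₁) Γ₂ Γ₃ (by grind [seqWeight, weight, sum_weight_insert_le])
      with h | h
    exacts [.inl h.negT, .inr h.negT]
  | conj φ ψ =>
    rcases ih Γ₁ Γ₂ (insert φ Γ₃) (by grind [seqWeight, weight, sum_weight_insert_le])
      with h₁ | h₁
    · rcases ih Γ₁ Γ₂ (insert ψ Γ₃) (by grind [seqWeight, weight, sum_weight_insert_le])
        with h₂ | h₂
      exacts [.inl (h₁.conjT h₂), .inr h₂.conjT2]
    · exact .inr h₁.conjT1
  | imp φ ψ =>
    rcases ih (insert φ Γ₁) Γ₂ (insert ψ Γ₃) (by grind [seqWeight, weight, sum_weight_insert_le])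
      with h | h
    exacts [.inl h.impT, .inr h.impT]

theorem SP_or_RP_of_isBasic (hbasic : ∀ φ ∈ Γ₁ ∪ Γ₂ ∪ Γ₃, φ.IsBasic) :
    SP Γ₁ Γ₂ Γ₃ ∨ RP Γ₁ Γ₂ Γ₃ := by
  by_cases hF : fls ∈ Γ₁
  · left
    rw [← Finset.insert_erase hF]
    exact SP.axF ..
  by_cases hcommon : (Γ₁ ∩ Γ₂ ∩ Γ₃).Nonempty
  · left
    obtain ⟨φ, hφ⟩ := hcommon
    simp only [Finset.mem_inter] at hφ
    rw [← Finset.insert_erase hφ.1.1, ← Finset.insert_erase hφ.1.2, ← Finset.insert_erase hφ.2]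
    exact SP.ax ..
  · exact .inr (RP.ax _ _ _ hbasic (Finset.not_nonempty_iff_eq_empty.1 hcommon) hF)

end Decomposition

theorem SP_or_RP (Γ₁ Γ₂ Γ₃ : Finset PForm) : SP Γ₁ Γ₂ Γ₃ ∨ RP Γ₁ Γ₂ Γ₃ := by
  by_cases hbasic : ∀ φ ∈ Γ₁ ∪ Γ₂ ∪ Γ₃, φ.IsBasic
  · exact SP_or_RP_of_isBasic hbasic
  obtain ⟨χ, hχ, hnb⟩ := not_forall₂.1 hbasic
  simp only [Finset.mem_union] at hχ
  rcases hχ with (hχ | hχ) | hχ <;> rw [← Finset.insert_erase hχ]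
  · exact SP_or_RP_insert₁ hnb fun Δ₁ Δ₂ Δ₃ _ => SP_or_RP Δ₁ Δ₂ Δ₃
  · exact SP_or_RP_insert₂ hnb fun Δ₁ Δ₂ Δ₃ _ => SP_or_RP Δ₁ Δ₂ Δ₃
  · exact SP_or_RP_insert₃ hnb fun Δ₁ Δ₂ Δ₃ _ => SP_or_RP Δ₁ Δ₂ Δ₃
termination_by seqWeight Γ₁ Γ₂ Γ₃
decreasing_by all_goals grind [seqWeight, Finset.sum_erase_add]

section Completeness
variable {Γ₁ Γ₂ Γ₃ : Finset PForm}

theorem SP_of_valid (h : PSeqValid Γ₁ Γ₂ Γ₃) : SP Γ₁ Γ₂ Γ₃ :=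
  (SP_or_RP Γ₁ Γ₂ Γ₃).resolve_right fun hRP =>
    let ⟨I, hI⟩ := hRP.pAntiRefutable
    pSeqTrue_iff_not_pAntiRefutedBy.1 (h I) hI

theorem RP_of_refutable (h : PAntiRefutable Γ₁ Γ₂ Γ₃) : RP Γ₁ Γ₂ Γ₃ :=
  (SP_or_RP Γ₁ Γ₂ Γ₃).resolve_left fun hSP =>
    let ⟨I, hI⟩ := h
    pSeqTrue_iff_not_pAntiRefutedBy.1 (hSP.pSeqTrue I) hI

end Completeness

lemma setOf_piecewise_eq_b (W : Finset ℕ) (I : ℕ → V3) :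
    {p | W.piecewise I (fun _ => .t) p = .b} = ↑W ∩ {p | I p = .b} := by
  ext p
  by_cases hp : p ∈ W <;> simp [hp]

def IsMinIncOn (Γ : Set PForm) (Pi W : Finset ℕ) (I : ℕ → V3) : Prop :=
  ∀ J, IsModelSet J Γ → (∀ q ∈ Pi, J q ≠ .b) → ¬ (↑W ∩ {p | J p = .b} ⊂ ↑W ∩ {p | I p = .b})

def MEPValid (S : Finset ℕ) (Γ : Finset PForm) (Pi : Finset ℕ) (Δ : Finset PForm)
    (Θ : Finset ℕ) : Prop :=
  ∀ I, IsModelSet I Γ → (∀ q ∈ S, I q = .b) → (∀ q ∈ Pi, I q ≠ .b) →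
    IsMinIncOn Γ Pi (S ∪ Pi ∪ Θ) I → ∃ δ ∈ Δ, IsModel I δ

theorem MEP.mepValid {S Pi Θ : Finset ℕ} {Γ Δ : Finset PForm} (h : MEP S Γ Pi Δ Θ) :
    MEPValid S Γ Pi Δ Θ := by
  induction h with
  | @m1 S Pi Θ Γ Δ q hRP =>
    intro I _ hS _ hmin
    obtain ⟨J, hJΓ, hJb, -⟩ := hRP.pAntiRefutable
    simp only [Finset.forall_mem_image, val_atom, Finset.mem_insert, Finset.mem_union] at hJb
    refine absurd ?_ (hmin J (fun φ hφ => isModel_iff_val_ne_f.2 (hJΓ φ hφ))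
      fun p hp => hJb (by simp [hp]))
    rw [Set.ssubset_iff_of_subset]
    · exact ⟨q, ⟨by simp, hS q (by simp)⟩, fun hq => hJb (by simp) hq.2⟩
    · rintro p ⟨hpW, hpb⟩
      refine ⟨hpW, hS p ?_⟩
      simp only [Finset.coe_union, Finset.coe_insert, Set.mem_union, Set.mem_insert_iff,
        Finset.mem_coe] at hpW
      grind
  | @m2 S Pi Θ Γ Δ hSP =>
    intro I hI hS hPi _
    have := hSP.pSeqTrue I
    simp only [PSeqTrue, Finset.mem_union, or_and_right, exists_or, Finset.exists_mem_image,
      val_atom] at this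
    rcases this with (⟨p, hp, h⟩ | ⟨φ, hφ, h⟩) | (⟨δ, hδ, h⟩ | ⟨p, hp, h⟩) | ⟨δ, hδ, h⟩ | ⟨p, hp, h⟩
    · simp [hS p hp] at h
    · exact absurd h (isModel_iff_val_ne_f.1 (hI φ hφ))
    · exact ⟨δ, hδ, .inl h⟩
    · exact absurd h (hPi p hp)
    · exact ⟨δ, hδ, .inr h⟩
    · simp [hS p hp] at h
  | @m3 S Pi Θ Γ Δ q _ _ ih₁ ih₂ =>
    intro I hI hS hPi hmin
    by_cases hq : I q = .b
    · refine ih₁ I hI (by simpa [hq]) hPi ?_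
      simpa only [Finset.insert_union, Finset.union_insert] using hmin
    · refine ih₂ I hI hS (by simpa [hq]) fun J hJ hJPi => ?_
      have := hmin J hJ fun p hp => hJPi p (Finset.mem_insert_of_mem hp)
      simpa only [Finset.insert_union, Finset.union_insert] using this

section Adequacy
variable {Γ Δ : Finset PForm}

theorem PMinIncModel.isMinIncOn {I : ℕ → V3} {Pi W : Finset ℕ} (hI : PMinIncModel I Γ)
    (hΓW : Γ.biUnion pvars ⊆ W) : IsMinIncOn Γ Pi W I := fun J hJ _ hlt =>
  hI.2 ⟨W.piecewise J fun _ => .t, isModelSet_piecewise hΓW hJ _, by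
    rw [setOf_piecewise_eq_b]
    exact hlt.trans_subset Set.inter_subset_right⟩

theorem pMinEntails_of_MEP (h : MEP ∅ Γ ∅ Δ ((Γ ∪ Δ).biUnion pvars)) : PMinEntails Γ Δ :=
  fun I hI => h.mepValid I hI.1 (by simp) (by simp) <| hI.isMinIncOn <| by
    simpa using Finset.biUnion_subset_biUnion_of_subset_left _ Finset.subset_union_left

theorem pMinIncModel_piecewise {S Pi W : Finset ℕ} {I : ℕ → V3} (hΓW : Γ.biUnion pvars ⊆ W)
    (hW : W ⊆ S ∪ Pi) (hI : IsModelSet I Γ) (hPi : ∀ p ∈ Pi, I p ≠ .b)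
    (hS : ∀ J, IsModelSet J Γ → (∀ p ∈ Pi, J p ≠ .b) → ∀ q ∈ S, J q = .b) :
    PMinIncModel (W.piecewise I fun _ => .t) Γ := by
  refine ⟨isModelSet_piecewise hΓW hI _, fun ⟨J, hJ, hlt⟩ => ?_⟩
  rw [setOf_piecewise_eq_b] at hlt
  have hJPi : ∀ p ∈ Pi, J p ≠ .b := fun p hp hJp => hPi p hp (hlt.subset hJp).2
  obtain ⟨q, ⟨hqW, hIq⟩, hJq⟩ := Set.exists_of_ssubset hlt
  have hqS : q ∈ S := by
    rcases Finset.mem_union.1 (hW hqW) with hqS | hqPi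
    exacts [hqS, absurd hIq (hPi q hqPi)]
  exact hJq (hS J hJ hJPi q hqS)

theorem MEP_of_pMinEntails_of_subset {S Pi : Finset ℕ} (h : PMinEntails Γ Δ)
    (hW : (Γ ∪ Δ).biUnion pvars ⊆ S ∪ Pi) : MEP S Γ Pi Δ ∅ := by
  by_cases hS : ∀ J, IsModelSet J Γ → (∀ p ∈ Pi, J p ≠ .b) → ∀ q ∈ S, J q = .b
  · refine MEP.m2 (SP_of_valid fun I => pSeqTrue_iff_not_pAntiRefutedBy.2 fun ⟨hf, hb, ht⟩ => ?_)
    simp only [Finset.forall_mem_union, Finset.forall_mem_image, val_atom] at hf hb ht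
    obtain ⟨δ, hδ, hIδ⟩ := h _ <| pMinIncModel_piecewise
      (Finset.biUnion_subset_biUnion_of_subset_left _ Finset.subset_union_left) hW
      (fun φ hφ => isModel_iff_val_ne_f.2 (hf.2 φ hφ)) (fun p hp => hb.2 hp) hS
    rw [isModel_congr fun p hp => Finset.piecewise_eq_of_mem _ _ _
      (Finset.mem_biUnion.2 ⟨δ, Finset.mem_union_right _ hδ, hp⟩)] at hIδ
    exact hIδ.elim (hb.1 δ hδ) (ht.1 δ hδ)
  · push Not at hS
    obtain ⟨J, hJ, hJPi, q, hq, hJq⟩ := hS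
    rw [← Finset.insert_eq_of_mem hq]
    refine MEP.m1 (RP_of_refutable ⟨J, fun φ hφ => isModel_iff_val_ne_f.1 (hJ φ hφ), ?_, by simp⟩)
    simpa [hJq] using hJPi

theorem MEP_of_pMinEntails {S Pi Θ : Finset ℕ} (h : PMinEntails Γ Δ)
    (hW : (Γ ∪ Δ).biUnion pvars ⊆ S ∪ Pi ∪ Θ) : MEP S Γ Pi Δ Θ := by
  induction Θ using Finset.induction_on generalizing S Pi with
  | empty => exact MEP_of_pMinEntails_of_subset h (by simpa using hW)
  | insert q Θ _ ih =>
    refine MEP.m3 (ih ?_) (ih ?_) <;>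
      simpa only [Finset.insert_union, Finset.union_insert] using hW

end Adequacy

/-- Adequacy of `ME_P` for three-valued minimally inconsistent entailment:
for finite P-theories `Γ` and `Δ`, `Γ ⊨ᵐ_P Δ` iff the ME_P-sequent
`∅;Γ,∅̄⇒Δ;Var(Γ∪Δ)` is provable in `ME_P`. -/
theorem MEP_adequate (Γ Δ : Finset PForm) :
    PMinEntails (Γ : Set PForm) (Δ : Set PForm) ↔
      MEP ∅ Γ ∅ Δ ((Γ ∪ Δ).biUnion PForm.pvars) :=
  ⟨fun h => MEP_of_pMinEntails h (by simp), pMinEntails_of_MEP⟩
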